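/- Let C ∈ ℝ^{K×R} with R ≥ 2, and suppose every pair of distinct columns of C is linearly independent. Let Π₁, Π₂ be R×R permutation matrices and Λ₁, Λ₂ be R×R invertible diagonal matrices. If C Π₂ Λ₂⁻¹ = C Π₁ Λ₁⁻¹, then Π₁ = Π₂ and Λ₁ = Λ₂. -/

import Mathlib

/-!
Column `j` of `C Π_σ Λ_d⁻¹` is `(d j)⁻¹` times column `σ j` of `C`. Comparing the two sides
column by column, column `σ₂ j` of `C` is a nonzero multiple of column `σ₁ j`; pairwise
independence forces `σ₁ j = σ₂ j`, and since a column of `C` is nonzero (there is a second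
column to pair it with) the two scalars agree.
-/

open Matrix

namespace Matrix

variable {m n α : Type*}

theorem mul_of_ite_eq_perm [NonAssocSemiring α] [Fintype n] [DecidableEq n] (C : Matrix m n α)
    (σ : Equiv.Perm n) : C * (of fun i j => if i = σ j then (1 : α) else 0) = C.submatrix id σ := by
  ext k j
  simp [mul_apply]

theorem inv_diagonal_of_ne_zero [Field α] [Fintype n] [DecidableEq n] {d : n → α}
    (hd : ∀ i, d i ≠ 0) : (diagonal d)⁻¹ = diagonal fun i => (d i)⁻¹ :=
  inv_eq_right_inv <| by simp [diagonal_mul_diagonal, hd]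

theorem mul_perm_mul_inv_diagonal_apply [Field α] [Fintype n] [DecidableEq n]
    (C : Matrix m n α) (σ : Equiv.Perm n) {d : n → α} (hd : ∀ i, d i ≠ 0) (k : m) (j : n) :
    (C * (of fun i j => if i = σ j then (1 : α) else 0) * (diagonal d)⁻¹) k j
      = (d j)⁻¹ * C k (σ j) := by
  rw [mul_of_ite_eq_perm, inv_diagonal_of_ne_zero hd, mul_diagonal, mul_comm, submatrix_apply,
    id_eq]

theorem eq_and_eq_of_mul_col_eq_mul_col [Field α] [Nontrivial n] {C : Matrix m n α}
    (hC : ∀ r s : n, r ≠ s → ∀ a b : α, (∀ k, a * C k r + b * C k s = 0) → a = 0 ∧ b = 0)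
    {r s : n} {a b : α} (ha : a ≠ 0) (h : ∀ k, a * C k r = b * C k s) : r = s ∧ a = b := by
  have hrs : r = s := by
    by_contra hrs
    exact ha (hC r s hrs a (-b) fun k => by linear_combination h k).1
  subst hrs
  obtain ⟨t, ht⟩ := exists_ne r
  have hab := (hC r t ht.symm (a - b) 0 fun k => by linear_combination h k).1
  exact ⟨rfl, sub_eq_zero.mp hab⟩

end Matrix

/-- If every pair of distinct columns of `C` is linearly independent, `Pm₁, Pm₂` are
permutation matrices, `Λ₁, Λ₂` are invertible diagonal matrices, and
`C Pm₂ Λ₂⁻¹ = C Pm₁ Λ₁⁻¹`, then `Pm₁ = Pm₂` and `Λ₁ = Λ₂`. -/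
theorem perm_scaling_ambiguity_unique
    {K R : ℕ} (hR : 2 ≤ R)
    (C : Matrix (Fin K) (Fin R) ℝ)
    (hC : ∀ r s : Fin R, r ≠ s → ∀ a b : ℝ,
      (∀ k, a * C k r + b * C k s = 0) → a = 0 ∧ b = 0)
    (Pm₁ Pm₂ Λ₁ Λ₂ : Matrix (Fin R) (Fin R) ℝ)
    (σ₁ σ₂ : Equiv.Perm (Fin R))
    (hPm₁ : Pm₁ = Matrix.of fun i j => if i = σ₁ j then (1 : ℝ) else 0)
    (hPm₂ : Pm₂ = Matrix.of fun i j => if i = σ₂ j then (1 : ℝ) else 0)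
    (d₁ d₂ : Fin R → ℝ)
    (hd₁ : ∀ r, d₁ r ≠ 0) (hd₂ : ∀ r, d₂ r ≠ 0)
    (hΛ₁ : Λ₁ = Matrix.diagonal d₁) (hΛ₂ : Λ₂ = Matrix.diagonal d₂)
    (heq : C * Pm₂ * Λ₂⁻¹ = C * Pm₁ * Λ₁⁻¹) :
    Pm₁ = Pm₂ ∧ Λ₁ = Λ₂ := by
  subst hPm₁ hPm₂ hΛ₁ hΛ₂
  have : Nontrivial (Fin R) := Fin.nontrivial_iff_two_le.mpr hR
  have hcol (j : Fin R) (k : Fin K) : (d₂ j)⁻¹ * C k (σ₂ j) = (d₁ j)⁻¹ * C k (σ₁ j) := by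
    simpa only [mul_perm_mul_inv_diagonal_apply C _ hd₁, mul_perm_mul_inv_diagonal_apply C _ hd₂]
      using congrFun₂ heq k j
  have hunique (j : Fin R) := eq_and_eq_of_mul_col_eq_mul_col hC (inv_ne_zero (hd₂ j)) (hcol j)
  have hσ : σ₂ = σ₁ := Equiv.ext fun j => (hunique j).1
  have hd : d₂ = d₁ := funext fun j => inv_injective (hunique j).2
  subst hσ hd
  exact ⟨rfl, rfl⟩
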